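/- Suppose G₁, G₂ ∈ ℝ^{k×k} are symmetric with G_i ≽ νI, and let α_i = argmin_α (1/2)αᵀG_iα − αᵀβ + λΩ(α) for a common β and convex Ω. Then ‖α₁ − α₂‖₂ ≤ (1/ν)‖G₁ − G₂‖_op ‖α₂‖₂. -/

import Mathlib

/-!
At a minimiser `a` of `½⟪x, G x⟫ - ⟪x, β⟫ + λ Ω x`, comparing with the points `a + t (b - a)`,
`t ∈ (0, 1]`, and bounding the penalty there by convexity gives the variational inequality
`⟪b - a, G a - β⟫ + λ (Ω b - Ω a) ≥ 0` for every `b`. Adding these inequalities for the two codes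
(with `b` the other code) cancels the penalty and `β`, leaving
`⟪d, G₁ d⟫ ≤ ⟪d, (G₂ - G₁) a₂⟫` for `d = a₁ - a₂`. Strong convexity `ν ‖d‖² ≤ ⟪d, G₁ d⟫` and
Cauchy–Schwarz then give `‖d‖ ≤ ‖G₁ - G₂‖ ‖a₂‖ / ν`.
-/

open Filter Topology Set
open Matrix WithLp
open scoped RealInnerProductSpace

theorem nonneg_of_forall_add_mul_nonneg {A B : ℝ} (h : ∀ t : ℝ, 0 < t → t ≤ 1 → 0 ≤ A + t * B) :
    0 ≤ A := by
  have hlim : Tendsto (fun t : ℝ => A + t * B) (𝓝[>] 0) (𝓝 A) :=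
    tendsto_nhdsWithin_of_tendsto_nhds <| by
      simpa using ((continuous_id.mul continuous_const).const_add A).tendsto (0 : ℝ)
  refine ge_of_tendsto hlim ?_
  filter_upwards [Ioc_mem_nhdsGT one_pos] with t ht using h t ht.1 ht.2

section PenalizedQuadratic

variable {E : Type*} [NormedAddCommGroup E] [InnerProductSpace ℝ E]

noncomputable def penalizedQuadratic (G : E →ₗ[ℝ] E) (β : E) (lam : ℝ) (Ω : E → ℝ) (x : E) : ℝ :=
  (1 / 2) * ⟪x, G x⟫ - ⟪x, β⟫ + lam * Ω x

theorem LinearMap.IsSymmetric.inner_add_smul_apply_add_smul {G : E →ₗ[ℝ] E} (hG : G.IsSymmetric)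
    (a u : E) (t : ℝ) :
    ⟪a + t • u, G (a + t • u)⟫ = ⟪a, G a⟫ + 2 * t * ⟪u, G a⟫ + t ^ 2 * ⟪u, G u⟫ := by
  have hswap : ⟪a, G u⟫ = ⟪u, G a⟫ := by rw [← hG, real_inner_comm]
  simp only [map_add, map_smul, inner_add_left, inner_add_right, inner_smul_left,
    inner_smul_right, hswap, RCLike.conj_to_real]
  ring

variable {β : E} {lam : ℝ} {Ω : E → ℝ}

theorem penalizedQuadratic_add_smul_sub_le {G : E →ₗ[ℝ] E} (hG : G.IsSymmetric) (hlam : 0 ≤ lam)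
    (hΩ : ConvexOn ℝ univ Ω) (a b : E) {t : ℝ} (ht₀ : 0 ≤ t) (ht₁ : t ≤ 1) :
    penalizedQuadratic G β lam Ω (a + t • (b - a)) ≤ penalizedQuadratic G β lam Ω a
      + t * (⟪b - a, G a - β⟫ + lam * (Ω b - Ω a)) + t ^ 2 / 2 * ⟪b - a, G (b - a)⟫ := by
  have hconv : Ω (a + t • (b - a)) ≤ (1 - t) * Ω a + t * Ω b := by
    have h := hΩ.2 (mem_univ a) (mem_univ b) (sub_nonneg.2 ht₁) ht₀ (sub_add_cancel 1 t)
    rwa [show (1 - t) • a + t • b = a + t • (b - a) by module, smul_eq_mul, smul_eq_mul] at h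
  have hpen := mul_le_mul_of_nonneg_left hconv hlam
  simp only [penalizedQuadratic, hG.inner_add_smul_apply_add_smul, inner_add_left,
    inner_smul_left, inner_sub_right, RCLike.conj_to_real] at hpen ⊢
  nlinarith

theorem inner_sub_add_penalty_nonneg_of_isMinOn {G : E →ₗ[ℝ] E} (hG : G.IsSymmetric)
    (hlam : 0 ≤ lam) (hΩ : ConvexOn ℝ univ Ω) {a : E}
    (ha : IsMinOn (penalizedQuadratic G β lam Ω) univ a) (b : E) :
    0 ≤ ⟪b - a, G a - β⟫ + lam * (Ω b - Ω a) := by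
  refine nonneg_of_forall_add_mul_nonneg (B := ⟪b - a, G (b - a)⟫ / 2) fun t ht₀ ht₁ => ?_
  have hmin := (isMinOn_univ_iff.1 ha) (a + t • (b - a))
  have hle := penalizedQuadratic_add_smul_sub_le (β := β) hG hlam hΩ a b ht₀.le ht₁
  have : 0 ≤ t * (⟪b - a, G a - β⟫ + lam * (Ω b - Ω a) + t * (⟪b - a, G (b - a)⟫ / 2)) := by
    nlinarith
  exact nonneg_of_mul_nonneg_right this ht₀

theorem norm_le_div_of_mul_norm_sq_le_inner {ν : ℝ} (hν : 0 < ν) {x y : E}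
    (h : ν * ‖x‖ ^ 2 ≤ ⟪x, y⟫) : ‖x‖ ≤ ‖y‖ / ν := by
  rw [le_div_iff₀ hν]
  have hcs : ν * ‖x‖ ^ 2 ≤ ‖x‖ * ‖y‖ := h.trans (real_inner_le_norm x y)
  rcases (norm_nonneg x).eq_or_lt with hx | hx
  · rw [← hx, zero_mul]
    exact norm_nonneg y
  · nlinarith

theorem inner_sub_apply_sub_le_of_isMinOn {G₁ G₂ : E →ₗ[ℝ] E} {a₁ a₂ : E}
    (hG₁ : G₁.IsSymmetric) (hG₂ : G₂.IsSymmetric) (hlam : 0 ≤ lam) (hΩ : ConvexOn ℝ univ Ω)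
    (ha₁ : IsMinOn (penalizedQuadratic G₁ β lam Ω) univ a₁)
    (ha₂ : IsMinOn (penalizedQuadratic G₂ β lam Ω) univ a₂) :
    ⟪a₁ - a₂, G₁ (a₁ - a₂)⟫ ≤ ⟪a₁ - a₂, G₂ a₂ - G₁ a₂⟫ := by
  have h₁ := inner_sub_add_penalty_nonneg_of_isMinOn hG₁ hlam hΩ ha₁ a₂
  have h₂ := inner_sub_add_penalty_nonneg_of_isMinOn hG₂ hlam hΩ ha₂ a₁
  rw [← neg_sub, inner_neg_left] at h₁
  simp only [map_sub, inner_sub_right] at h₁ h₂ ⊢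
  linarith

theorem norm_sub_le_of_isMinOn_penalizedQuadratic {G₁ G₂ : E →L[ℝ] E} {a₁ a₂ : E}
    (hG₁ : (G₁ : E →ₗ[ℝ] E).IsSymmetric) (hG₂ : (G₂ : E →ₗ[ℝ] E).IsSymmetric)
    {ν : ℝ} (hν : 0 < ν) (hcoer : ∀ x, ν * ‖x‖ ^ 2 ≤ ⟪x, G₁ x⟫)
    (hlam : 0 ≤ lam) (hΩ : ConvexOn ℝ univ Ω)
    (ha₁ : IsMinOn (penalizedQuadratic G₁ β lam Ω) univ a₁)
    (ha₂ : IsMinOn (penalizedQuadratic G₂ β lam Ω) univ a₂) :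
    ‖a₁ - a₂‖ ≤ 1 / ν * ‖G₁ - G₂‖ * ‖a₂‖ := calc
  ‖a₁ - a₂‖ ≤ ‖G₂ a₂ - G₁ a₂‖ / ν := norm_le_div_of_mul_norm_sq_le_inner hν <|
      (hcoer _).trans (inner_sub_apply_sub_le_of_isMinOn hG₁ hG₂ hlam hΩ ha₁ ha₂)
  _ ≤ ‖G₁ - G₂‖ * ‖a₂‖ / ν := by
      gcongr
      rw [norm_sub_rev]
      exact (G₁ - G₂).le_opNorm a₂
  _ = 1 / ν * ‖G₁ - G₂‖ * ‖a₂‖ := by ring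

end PenalizedQuadratic

theorem Matrix.isSymmetric_toEuclideanCLM {n : Type*} [Fintype n] [DecidableEq n]
    {A : Matrix n n ℝ} (hA : A.IsSymm) :
    (toEuclideanCLM (𝕜 := ℝ) A : EuclideanSpace ℝ n →ₗ[ℝ] EuclideanSpace ℝ n).IsSymmetric := by
  rwa [coe_toEuclideanCLM_eq_toEuclideanLin, isSymmetric_toEuclideanLin_iff, isHermitian_iff_isSymm]

theorem penalizedQuadratic_toEuclideanCLM {n : Type*} [Fintype n] [DecidableEq n]
    (A : Matrix n n ℝ) (β : n → ℝ) (lam : ℝ) (Ω : (n → ℝ) → ℝ) (x : EuclideanSpace ℝ n) :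
    penalizedQuadratic (toEuclideanCLM (𝕜 := ℝ) A) (toLp 2 β) lam (Ω ∘ ofLp) x
      = 1 / 2 * (ofLp x ⬝ᵥ A *ᵥ ofLp x) - ofLp x ⬝ᵥ β + lam * Ω (ofLp x) := by
  rw [penalizedQuadratic, ContinuousLinearMap.coe_coe, inner_toEuclideanCLM,
    EuclideanSpace.inner_eq_star_dotProduct, ofLp_toLp, star_trivial, dotProduct_comm β,
    Function.comp_apply]

theorem EuclideanSpace.norm_toLp_eq_sqrt {n : Type*} [Fintype n] (x : n → ℝ) :
    ‖toLp 2 x‖ = √(∑ i, x i ^ 2) := by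
  rw [← EuclideanSpace.real_norm_sq_eq, Real.sqrt_sq (norm_nonneg _)]

theorem code_stability_in_gram_general
    (k : ℕ) (ν lam : ℝ) (hν : 0 < ν) (hlam : 0 ≤ lam)
    (G₁ G₂ : Matrix (Fin k) (Fin k) ℝ) (hsymm₁ : G₁.IsSymm) (hsymm₂ : G₂.IsSymm)
    (hpd₁ : ∀ a : Fin k → ℝ, ν * (∑ i, (a i) ^ 2) ≤ a ⬝ᵥ G₁.mulVec a)
    (Om : (Fin k → ℝ) → ℝ) (hOm : ConvexOn ℝ Set.univ Om)
    (β a₁ a₂ : Fin k → ℝ)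
    (h₁ : ∀ b : Fin k → ℝ,
      (1 / 2) * (a₁ ⬝ᵥ G₁.mulVec a₁) - a₁ ⬝ᵥ β + lam * Om a₁
        ≤ (1 / 2) * (b ⬝ᵥ G₁.mulVec b) - b ⬝ᵥ β + lam * Om b)
    (h₂ : ∀ b : Fin k → ℝ,
      (1 / 2) * (a₂ ⬝ᵥ G₂.mulVec a₂) - a₂ ⬝ᵥ β + lam * Om a₂
        ≤ (1 / 2) * (b ⬝ᵥ G₂.mulVec b) - b ⬝ᵥ β + lam * Om b) :
    Real.sqrt (∑ i, (a₁ i - a₂ i) ^ 2)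
      ≤ (1 / ν) * ‖Matrix.toEuclideanCLM (𝕜 := ℝ) (G₁ - G₂)‖
          * Real.sqrt (∑ i, (a₂ i) ^ 2) := by
  have hcoer (x : EuclideanSpace ℝ (Fin k)) :
      ν * ‖x‖ ^ 2 ≤ ⟪x, toEuclideanCLM (𝕜 := ℝ) G₁ x⟫ := by
    simpa [EuclideanSpace.real_norm_sq_eq, inner_toEuclideanCLM] using hpd₁ (ofLp x)
  have hΩ : ConvexOn ℝ univ (Om ∘ ofLp : EuclideanSpace ℝ (Fin k) → ℝ) :=
    hOm.comp_linearMap (WithLp.linearEquiv 2 ℝ (Fin k → ℝ)).toLinearMap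
  have hmin₁ : IsMinOn (penalizedQuadratic (toEuclideanCLM (𝕜 := ℝ) G₁) (toLp 2 β) lam
      (Om ∘ ofLp)) univ (toLp 2 a₁) := isMinOn_univ_iff.2 fun b => by
    simpa only [penalizedQuadratic_toEuclideanCLM] using h₁ (ofLp b)
  have hmin₂ : IsMinOn (penalizedQuadratic (toEuclideanCLM (𝕜 := ℝ) G₂) (toLp 2 β) lam
      (Om ∘ ofLp)) univ (toLp 2 a₂) := isMinOn_univ_iff.2 fun b => by
    simpa only [penalizedQuadratic_toEuclideanCLM] using h₂ (ofLp b)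
  have key := norm_sub_le_of_isMinOn_penalizedQuadratic (isSymmetric_toEuclideanCLM hsymm₁)
    (isSymmetric_toEuclideanCLM hsymm₂) hν hcoer hlam hΩ hmin₁ hmin₂
  rwa [← toLp_sub, ← map_sub, EuclideanSpace.norm_toLp_eq_sqrt,
    EuclideanSpace.norm_toLp_eq_sqrt] at key

/-- For symmetric `G₁, G₂ ≽ νI` and common `β`, the penalized codes
`α_i = argmin_α (1/2)αᵀG_iα − αᵀβ + λΩ(α)` satisfy
`‖α₁ − α₂‖₂ ≤ (1/ν)‖G₁ − G₂‖_op ‖α₂‖₂`, with `‖·‖_op` the (Euclidean) operator norm. -/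
theorem code_stability_in_gram
    (k : ℕ) (ν lam : ℝ) (hν : 0 < ν) (hlam : 0 ≤ lam)
    (G₁ G₂ : Matrix (Fin k) (Fin k) ℝ) (hsymm₁ : G₁.IsSymm) (hsymm₂ : G₂.IsSymm)
    (hpd₁ : ∀ a : Fin k → ℝ, ν * (∑ i, (a i) ^ 2) ≤ a ⬝ᵥ G₁.mulVec a)
    (hpd₂ : ∀ a : Fin k → ℝ, ν * (∑ i, (a i) ^ 2) ≤ a ⬝ᵥ G₂.mulVec a)
    (Om : (Fin k → ℝ) → ℝ) (hOm : ConvexOn ℝ Set.univ Om)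
    (β a₁ a₂ : Fin k → ℝ)
    (h₁ : ∀ b : Fin k → ℝ,
      (1 / 2) * (a₁ ⬝ᵥ G₁.mulVec a₁) - a₁ ⬝ᵥ β + lam * Om a₁
        ≤ (1 / 2) * (b ⬝ᵥ G₁.mulVec b) - b ⬝ᵥ β + lam * Om b)
    (h₂ : ∀ b : Fin k → ℝ,
      (1 / 2) * (a₂ ⬝ᵥ G₂.mulVec a₂) - a₂ ⬝ᵥ β + lam * Om a₂
        ≤ (1 / 2) * (b ⬝ᵥ G₂.mulVec b) - b ⬝ᵥ β + lam * Om b) :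
    Real.sqrt (∑ i, (a₁ i - a₂ i) ^ 2)
      ≤ (1 / ν) * ‖Matrix.toEuclideanCLM (𝕜 := ℝ) (G₁ - G₂)‖
          * Real.sqrt (∑ i, (a₂ i) ^ 2) :=
  code_stability_in_gram_general k ν lam hν hlam G₁ G₂ hsymm₁ hsymm₂ hpd₁ Om hOm β a₁ a₂ h₁ h₂
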